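/- Let M be a quadratic module in ℝ[X]. Then M is Archimedean if and only if M^n is an Archimedean quadratic module in M_n(ℝ[X]). -/

import Mathlib

open Matrix
noncomputable section

/-- The polynomial ring `ℝ[x_1, …, x_d]`. -/
abbrev RX (d : ℕ) : Type := MvPolynomial (Fin d) ℝ

/-- The basic closed semialgebraic set `K_G` attached to a set `G` of polynomials. -/
def KsetP {d : ℕ} (G : Set (RX d)) : Set (Fin d → ℝ) :=
  {x | ∀ g ∈ G, 0 ≤ MvPolynomial.eval x g}

/-- Evaluation of a polynomial matrix at a point of `ℝ^d`. -/
def evalMat {d n : ℕ} (x : Fin d → ℝ) (A : Matrix (Fin n) (Fin n) (RX d)) :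
    Matrix (Fin n) (Fin n) ℝ :=
  A.map (MvPolynomial.eval x)

/-- The set `K_𝒢` attached to a set `𝒢` of symmetric polynomial matrices. -/
def KsetM {d n : ℕ} (𝒢 : Set (Matrix (Fin n) (Fin n) (RX d))) : Set (Fin d → ℝ) :=
  {x | ∀ A ∈ 𝒢, (evalMat x A).PosSemidef}

/-- Membership in the preordering of a commutative ring generated by a subset `G`:
the smallest subset containing `G` and all squares and closed under addition and
multiplication.  For `G = {g_1, …, g_m}` this is exactly the set of all finite sums
`Σ_{e ∈ {0,1}^m} σ_e g_1^{e_1} ⋯ g_m^{e_m}` with each `σ_e` a sum of squares. -/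
inductive IsInPreordering {R : Type} [CommRing R] (G : Set R) : R → Prop
  | sq (a : R) : IsInPreordering G (a ^ 2)
  | gen {g : R} : g ∈ G → IsInPreordering G g
  | add {a b : R} : IsInPreordering G a → IsInPreordering G b → IsInPreordering G (a + b)
  | mul {a b : R} : IsInPreordering G a → IsInPreordering G b → IsInPreordering G (a * b)

/-- Membership in the quadratic module of a commutative ring generated by a subset `G`:
for `G = {g_1, …, g_m}` this is exactly the set of all sums
`σ_0 + σ_1 g_1 + ⋯ + σ_m g_m` with each `σ_i` a sum of squares. -/
inductive IsInQuadModuleGen {R : Type} [CommRing R] (G : Set R) : R → Prop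
  | one : IsInQuadModuleGen G 1
  | gen {g : R} : g ∈ G → IsInQuadModuleGen G g
  | add {a b : R} : IsInQuadModuleGen G a → IsInQuadModuleGen G b → IsInQuadModuleGen G (a + b)
  | mul_sq (f : R) {a : R} : IsInQuadModuleGen G a → IsInQuadModuleGen G (f ^ 2 * a)

/-- For a quadratic module `M ⊆ R`, the quadratic module
`M^n = {Σ_i m_i A_iᵀ A_i : m_i ∈ M, A_i ∈ M_n(R)}` of `n × n` matrices. -/
def MatQM {R : Type} [CommRing R] (n : ℕ) (M : Set R) : Set (Matrix (Fin n) (Fin n) R) :=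
  {B | ∃ (k : ℕ) (m : Fin k → R) (A : Fin k → Matrix (Fin n) (Fin n) R),
    (∀ i, m i ∈ M) ∧ B = ∑ i, m i • ((A i)ᵀ * A i)}

/-- A quadratic module in `M_n(R)`: a subset of the symmetric matrices containing `I_n`,
closed under addition and under congruence `B ↦ Aᵀ B A`. -/
def IsMatQuadModule {R : Type} [CommRing R] {n : ℕ}
    (𝓜 : Set (Matrix (Fin n) (Fin n) R)) : Prop :=
  (∀ B ∈ 𝓜, B.IsSymm) ∧ (1 : Matrix (Fin n) (Fin n) R) ∈ 𝓜 ∧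
    (∀ A ∈ 𝓜, ∀ B ∈ 𝓜, A + B ∈ 𝓜) ∧
    (∀ (A : Matrix (Fin n) (Fin n) R), ∀ B ∈ 𝓜, Aᵀ * B * A ∈ 𝓜)

/-- Membership in the quadratic module `𝓜_𝒢` of `M_n(R)` generated by a set `𝒢` of
symmetric matrices. -/
inductive InMatQM {R : Type} [CommRing R] {n : ℕ}
    (𝒢 : Set (Matrix (Fin n) (Fin n) R)) : Matrix (Fin n) (Fin n) R → Prop
  | one : InMatQM 𝒢 1
  | gen {B : Matrix (Fin n) (Fin n) R} : B ∈ 𝒢 → InMatQM 𝒢 B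
  | add {A B : Matrix (Fin n) (Fin n) R} : InMatQM 𝒢 A → InMatQM 𝒢 B → InMatQM 𝒢 (A + B)
  | conj (A : Matrix (Fin n) (Fin n) R) {B : Matrix (Fin n) (Fin n) R} :
      InMatQM 𝒢 B → InMatQM 𝒢 (Aᵀ * B * A)

/-- Membership in the preordering `𝒯_𝒢` of `M_n(R)` generated by a set `𝒢` of symmetric
matrices: the smallest quadratic module of `M_n(R)` containing `𝒢` whose intersection with
`R · I_n` is closed under multiplication. -/
inductive InMatPre {R : Type} [CommRing R] {n : ℕ}
    (𝒢 : Set (Matrix (Fin n) (Fin n) R)) : Matrix (Fin n) (Fin n) R → Prop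
  | one : InMatPre 𝒢 1
  | gen {B : Matrix (Fin n) (Fin n) R} : B ∈ 𝒢 → InMatPre 𝒢 B
  | add {A B : Matrix (Fin n) (Fin n) R} : InMatPre 𝒢 A → InMatPre 𝒢 B → InMatPre 𝒢 (A + B)
  | conj (A : Matrix (Fin n) (Fin n) R) {B : Matrix (Fin n) (Fin n) R} :
      InMatPre 𝒢 B → InMatPre 𝒢 (Aᵀ * B * A)
  | smul_mul {p q : R} : InMatPre 𝒢 (p • (1 : Matrix (Fin n) (Fin n) R)) →
      InMatPre 𝒢 (q • (1 : Matrix (Fin n) (Fin n) R)) →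
      InMatPre 𝒢 ((p * q) • (1 : Matrix (Fin n) (Fin n) R))

/-- A quadratic module `𝓜` of `M_n(R)` is Archimedean if for every `A ∈ M_n(R)` there is
`k ∈ ℕ` with `k·I_n − Aᵀ A ∈ 𝓜`. -/
def MatArch {R : Type} [CommRing R] {n : ℕ} (𝓜 : Set (Matrix (Fin n) (Fin n) R)) : Prop :=
  ∀ A : Matrix (Fin n) (Fin n) R, ∃ k : ℕ,
    (k : R) • (1 : Matrix (Fin n) (Fin n) R) - Aᵀ * A ∈ 𝓜

/-- A quadratic module `M` of `R` (`1 ∈ M`, `M + M ⊆ M`, `f² M ⊆ M`). -/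
def IsQuadModule {R : Type} [CommRing R] (M : Set R) : Prop :=
  (1 : R) ∈ M ∧ (∀ a ∈ M, ∀ b ∈ M, a + b ∈ M) ∧ ∀ (f : R), ∀ a ∈ M, f ^ 2 * a ∈ M

/-- A quadratic module `M` of `R` is Archimedean if for every `f ∈ R` there is `k ∈ ℕ`
with `k − f² ∈ M`. -/
def ScalarArch {R : Type} [CommRing R] (M : Set R) : Prop :=
  ∀ f : R, ∃ k : ℕ, (k : R) - f ^ 2 ∈ M

/-- The set `R_∞(f, S)` of asymptotic values of `f` on `S`. -/
def AsympVals {d : ℕ} (f : RX d) (S : Set (Fin d → ℝ)) : Set ℝ :=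
  {y | ∃ u : ℕ → (Fin d → ℝ), (∀ k, u k ∈ S) ∧
    Filter.Tendsto (fun k => ‖u k‖) Filter.atTop Filter.atTop ∧
    Filter.Tendsto (fun k => MvPolynomial.eval (u k) f) Filter.atTop (nhds y)}

/-- The scalar polynomial `xᵀ F x` attached to a vector `x ∈ ℝ^n` and a polynomial
matrix `F`. -/
def quadForm {d n : ℕ} (v : Fin n → ℝ) (F : Matrix (Fin n) (Fin n) (RX d)) : RX d :=
  ∑ i, ∑ j, MvPolynomial.C (v i * v j) * F i j

/-- The canonical map from `ℝ[x_1, …, x_d]` to the completion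
`ℝ[[x_1 − p_1, …, x_d − p_d]]` at a point `p`, i.e. Taylor expansion at `p`,
sending `x_i` to `p_i + X_i`. -/
def toCompletion {d : ℕ} (p : Fin d → ℝ) (f : RX d) : MvPowerSeries (Fin d) ℝ :=
  MvPolynomial.eval₂ (MvPowerSeries.C : ℝ →+* MvPowerSeries (Fin d) ℝ)
    (fun i => (MvPowerSeries.C : ℝ →+* MvPowerSeries (Fin d) ℝ) (p i) + MvPowerSeries.X i) f

/-- The Hessian matrix `D²f(p)` of a polynomial `f` at a point `p`. -/
def Hess {d : ℕ} (f : RX d) (p : Fin d → ℝ) : Matrix (Fin d) (Fin d) ℝ :=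
  Matrix.of fun i j => MvPolynomial.eval p (MvPolynomial.pderiv i (MvPolynomial.pderiv j f))

/-- `t_1, …, t_d` is a system of uniformizing parameters at `p`: each `t_i` vanishes
at `p` and their differentials at `p` are linearly independent. -/
def IsUniformizing {d : ℕ} (p : Fin d → ℝ) (t : Fin d → RX d) : Prop :=
  (∀ i, MvPolynomial.eval p (t i) = 0) ∧
    (Matrix.of fun i j => MvPolynomial.eval p (MvPolynomial.pderiv j (t i))).det ≠ 0

/-- `f` satisfies the boundary Hessian conditions at `p` with respect to
`t_1, …, t_k`, part of a system of uniformizing parameters `t_1, …, t_d` at `p`: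
in the completion at `p`, `f = f_0 + f_1 + f_2 + ⋯` with `f_j` homogeneous of degree
`j` in `t_1, …, t_d`, `f_1 = a_1 t_1 + ⋯ + a_k t_k` with all `a_i > 0`, and the quadratic
form `f_2(0, …, 0, t_{k+1}, …, t_d)` is positive definite. -/
def SatisfiesBHC {d : ℕ} (p : Fin d → ℝ) (t : Fin d → RX d) (k : ℕ) (f : RX d) : Prop :=
  ∃ (a : Fin d → ℝ) (c : Matrix (Fin d) (Fin d) ℝ),
    (∀ i : Fin d, (i : ℕ) < k → 0 < a i) ∧ (∀ i : Fin d, k ≤ (i : ℕ) → a i = 0) ∧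
    (∀ v : Fin d → ℝ, v ≠ 0 → (∀ i : Fin d, (i : ℕ) < k → v i = 0) →
      0 < ∑ i, ∑ j, c i j * v i * v j) ∧
    toCompletion p (f - MvPolynomial.C (MvPolynomial.eval p f)
        - ∑ i, MvPolynomial.C (a i) * t i
        - ∑ i, ∑ j, MvPolynomial.C (c i j) * (t i * t j))
      ∈ (Ideal.span (Set.range fun i => toCompletion p (t i))) ^ 3

/-! Each diagonal entry of `Σ mᵢ Aᵢᵀ Aᵢ` lies in `M`, and the `(0, 0)` entry of
`k·I − (f·I)ᵀ(f·I)` is `k − f²`. Conversely, the matrices `X` with `k·I − XᵀX ∈ M^n` for some `k`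
are closed under addition, by
`2(k + l)·I − (X + Y)ᵀ(X + Y) = 2(k·I − XᵀX) + 2(l·I − YᵀY) + (X − Y)ᵀ(X − Y)`,
so it suffices to bound the matrices `f·E_ab` with a single nonzero entry, where
`k·I − (f E_ab)ᵀ(f E_ab) = (k − f²) E_bb + k (I − E_bb)` and `E_bb`, `I − E_bb` are symmetric
idempotents. -/

namespace IsQuadModule

variable {R : Type} [CommRing R] {M : Set R}

lemma zero_mem (hM : IsQuadModule M) : (0 : R) ∈ M := by
  simpa using hM.2.2 0 1 hM.1

lemma sum_mem (hM : IsQuadModule M) {ι : Type} (s : Finset ι) {g : ι → R}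
    (h : ∀ i ∈ s, g i ∈ M) : ∑ i ∈ s, g i ∈ M :=
  Finset.sum_induction g (· ∈ M) (fun a b ha hb => hM.2.1 a ha b hb) hM.zero_mem h

lemma natCast_mem (hM : IsQuadModule M) (k : ℕ) : (k : R) ∈ M := by
  induction k with
  | zero => simpa using hM.zero_mem
  | succ k ih => simpa using hM.2.1 _ ih _ hM.1

end IsQuadModule

namespace MatQM

variable {R : Type} [CommRing R] {n : ℕ} {M : Set R}

lemma smul_transpose_mul_self_mem {m : R} (hm : m ∈ M) (C : Matrix (Fin n) (Fin n) R) :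
    m • (Cᵀ * C) ∈ MatQM n M :=
  ⟨1, fun _ => m, fun _ => C, fun _ => hm, by simp⟩

lemma transpose_mul_self_mem (hM : IsQuadModule M) (C : Matrix (Fin n) (Fin n) R) :
    Cᵀ * C ∈ MatQM n M := by
  simpa using smul_transpose_mul_self_mem hM.1 C

lemma add_mem {X Y : Matrix (Fin n) (Fin n) R} (hX : X ∈ MatQM n M) (hY : Y ∈ MatQM n M) :
    X + Y ∈ MatQM n M := by
  obtain ⟨k, m, A, hm, rfl⟩ := hX
  obtain ⟨l, m', A', hm', rfl⟩ := hY
  refine ⟨k + l, Fin.append m m', Fin.append A A', Fin.addCases (by simpa using hm)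
    (by simpa using hm'), ?_⟩
  simp [Fin.sum_univ_add]

lemma diag_mem (hM : IsQuadModule M) {B : Matrix (Fin n) (Fin n) R} (hB : B ∈ MatQM n M)
    (j : Fin n) : B j j ∈ M := by
  obtain ⟨k, m, A, hm, rfl⟩ := hB
  simp only [Matrix.sum_apply, Matrix.smul_apply, Matrix.mul_apply, Matrix.transpose_apply,
    smul_eq_mul, Finset.mul_sum]
  refine hM.sum_mem _ fun i _ => hM.sum_mem _ fun p _ => ?_
  simpa [sq, mul_comm, mul_left_comm] using hM.2.2 (A i p j) _ (hm i)

end MatQM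

section Bounded

variable {R : Type} [CommRing R] {n : ℕ}

def IsMatBounded (𝓜 : Set (Matrix (Fin n) (Fin n) R)) (X : Matrix (Fin n) (Fin n) R) : Prop :=
  ∃ k : ℕ, (k : R) • (1 : Matrix (Fin n) (Fin n) R) - Xᵀ * X ∈ 𝓜

variable {𝓜 : Set (Matrix (Fin n) (Fin n) R)}

lemma matArch_iff_forall_isMatBounded : MatArch 𝓜 ↔ ∀ A, IsMatBounded 𝓜 A := Iff.rfl

lemma isMatBounded_zero (hsq : ∀ C : Matrix (Fin n) (Fin n) R, Cᵀ * C ∈ 𝓜) :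
    IsMatBounded 𝓜 0 :=
  ⟨0, by simpa using hsq 0⟩

lemma IsMatBounded.add (hadd : ∀ A ∈ 𝓜, ∀ B ∈ 𝓜, A + B ∈ 𝓜)
    (hsq : ∀ C : Matrix (Fin n) (Fin n) R, Cᵀ * C ∈ 𝓜) {X Y : Matrix (Fin n) (Fin n) R}
    (hX : IsMatBounded 𝓜 X) (hY : IsMatBounded 𝓜 Y) : IsMatBounded 𝓜 (X + Y) := by
  obtain ⟨k, hk⟩ := hX
  obtain ⟨l, hl⟩ := hY
  refine ⟨2 * (k + l), ?_⟩
  have key : ((2 * (k + l) : ℕ) : R) • (1 : Matrix (Fin n) (Fin n) R) - (X + Y)ᵀ * (X + Y) =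
      ((k : R) • 1 - Xᵀ * X) + ((k : R) • 1 - Xᵀ * X) + (((l : R) • 1 - Yᵀ * Y) +
        ((l : R) • 1 - Yᵀ * Y)) + (X - Y)ᵀ * (X - Y) := by
    simp only [Matrix.transpose_add, Matrix.transpose_sub, Nat.cast_mul, Nat.cast_add,
      Nat.cast_ofNat, mul_smul, add_smul, smul_add, two_smul]
    noncomm_ring
  rw [key]
  exact hadd _ (hadd _ (hadd _ hk _ hk) _ (hadd _ hl _ hl)) _ (hsq _)

lemma isMatBounded_sum (hadd : ∀ A ∈ 𝓜, ∀ B ∈ 𝓜, A + B ∈ 𝓜)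
    (hsq : ∀ C : Matrix (Fin n) (Fin n) R, Cᵀ * C ∈ 𝓜) {ι : Type} (s : Finset ι)
    {X : ι → Matrix (Fin n) (Fin n) R} (h : ∀ i ∈ s, IsMatBounded 𝓜 (X i)) :
    IsMatBounded 𝓜 (∑ i ∈ s, X i) :=
  Finset.sum_induction X (IsMatBounded 𝓜) (fun _ _ => IsMatBounded.add hadd hsq)
    (isMatBounded_zero hsq) h

end Bounded

section Archimedean

variable {R : Type} [CommRing R] {n : ℕ} {M : Set R}

lemma isMatBounded_single (hM : IsQuadModule M) {f : R} {k : ℕ} (hk : (k : R) - f ^ 2 ∈ M)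
    (a b : Fin n) : IsMatBounded (MatQM n M) (Matrix.single a b f) := by
  refine ⟨k, ?_⟩
  set E : Matrix (Fin n) (Fin n) R := Matrix.single b b 1
  have hEt : Eᵀ = E := by simp [E, Matrix.transpose_single]
  have hEE : E * E = E := by simp [E]
  have key :
      (k : R) • (1 : Matrix (Fin n) (Fin n) R) - (Matrix.single a b f)ᵀ * Matrix.single a b f =
        ((k : R) - f ^ 2) • (Eᵀ * E) + (k : R) • ((1 - E)ᵀ * (1 - E)) := by
    have hsingle : (Matrix.single a b f)ᵀ * Matrix.single a b f = f ^ 2 • E := by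
      simp [E, Matrix.transpose_single, Matrix.smul_single, sq]
    have hcompl : (1 - E)ᵀ * (1 - E) = 1 - E := by
      rw [Matrix.transpose_sub, Matrix.transpose_one, hEt, mul_sub, sub_mul, sub_mul, hEE]
      noncomm_ring
    rw [hsingle, hcompl, hEt, hEE]
    module
  rw [key]
  exact MatQM.add_mem (MatQM.smul_transpose_mul_self_mem hk E)
    (MatQM.smul_transpose_mul_self_mem (hM.natCast_mem k) _)

theorem matArch_matQM_of_scalarArch (hM : IsQuadModule M) (h : ScalarArch M) :
    MatArch (MatQM n M) := by
  have hadd : ∀ X ∈ MatQM n M, ∀ Y ∈ MatQM n M, X + Y ∈ MatQM n M :=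
    fun _ hX _ hY => MatQM.add_mem hX hY
  have hsq := MatQM.transpose_mul_self_mem (n := n) hM
  refine matArch_iff_forall_isMatBounded.mpr fun A => ?_
  rw [Matrix.matrix_eq_sum_single A]
  refine isMatBounded_sum hadd hsq _ fun a _ => isMatBounded_sum hadd hsq _ fun b _ => ?_
  obtain ⟨k, hk⟩ := h (A a b)
  exact isMatBounded_single hM hk a b

theorem scalarArch_of_matArch_matQM (hn : 0 < n) (hM : IsQuadModule M)
    (h : MatArch (MatQM n M)) : ScalarArch M := by
  intro f
  obtain ⟨k, hk⟩ := h (f • 1)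
  refine ⟨k, ?_⟩
  simpa [sq] using MatQM.diag_mem hM hk ⟨0, hn⟩

end Archimedean

/-- A quadratic module `M` of `ℝ[X]` is Archimedean iff `M^n` is an Archimedean
quadratic module of `M_n(ℝ[X])`. -/
theorem stmt_11 {d n : ℕ} (hn : 0 < n) (M : Set (RX d)) (hM : IsQuadModule M) :
    ScalarArch M ↔ MatArch (MatQM n M) :=
  ⟨matArch_matQM_of_scalarArch hM, scalarArch_of_matArch_matQM hn hM⟩

end
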